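/- Let n ≥ 3. If ξ ∈ ℂ^n is nonzero and η ∈ ℂ^n satisfies (η_i ξ_j + η_j ξ_i)/2 = δ_{ij} · (Σ_{k=1}^n η_kξ_k)/n for all 1 ≤ i, j ≤ n, then η = 0. That is, the deviatoric symmetric gradient operator ℰ_d is ℂ-elliptic in every dimension n ≥ 3. -/

import Mathlib

/-!
If `η ⊙ ξ = c • 1`, the products `a i j = η i * ξ j` have constant diagonal `c` and are
antisymmetric off the diagonal. Around a cycle of three distinct indices the product
`a i j * a j k * a k i` equals `c ^ 3` (regroup it as the three diagonal entries) and also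
`-c ^ 3` (flip each factor), so `c = 0`. Then `η i * ξ i = 0` at an index with `ξ i ≠ 0` forces
`η i = 0`, and antisymmetry gives `η j * ξ i = 0`, i.e. `η j = 0`, for every other `j`.
-/

section Domain

variable {R ι : Type*} [CommRing R] [NoZeroDivisors R] [NeZero (2 : R)] {η ξ : ι → R} {c : R}

theorem eq_zero_of_mul_self_eq_of_antisymm {i j k : ι} (hij : i ≠ j) (hjk : j ≠ k) (hik : i ≠ k)
    (hdiag : ∀ i, η i * ξ i = c) (hanti : ∀ i j, i ≠ j → η i * ξ j = -(η j * ξ i)) : c = 0 := by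
  have hcycle : c ^ 3 = -c ^ 3 :=
    calc c ^ 3 = (η i * ξ i) * (η j * ξ j) * (η k * ξ k) := by rw [hdiag, hdiag, hdiag]; ring
      _ = (η i * ξ j) * (η j * ξ k) * (η k * ξ i) := by ring
      _ = -((η j * ξ i) * (η k * ξ j) * (η i * ξ k)) := by
        rw [hanti i j hij, hanti j k hjk, hanti k i hik.symm]; ring
      _ = -((η i * ξ i) * (η j * ξ j) * (η k * ξ k)) := by ring
      _ = -c ^ 3 := by rw [hdiag, hdiag, hdiag]; ring
  have h2c : (2 : R) * c ^ 3 = 0 := by linear_combination hcycle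
  exact pow_eq_zero_iff three_ne_zero |>.mp ((mul_eq_zero.mp h2c).resolve_left two_ne_zero)

end Domain

theorem eq_zero_of_mul_self_eq_zero_of_antisymm {R ι : Type*} [CommRing R] [NoZeroDivisors R]
    {η ξ : ι → R} (hξ : ξ ≠ 0) (hdiag : ∀ i, η i * ξ i = 0)
    (hanti : ∀ i j, i ≠ j → η i * ξ j = -(η j * ξ i)) : η = 0 := by
  obtain ⟨i, hi⟩ : ∃ i, ξ i ≠ 0 := Function.ne_iff.mp hξ
  have hηi : η i = 0 := (mul_eq_zero.mp (hdiag i)).resolve_right hi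
  funext j
  rcases eq_or_ne j i with rfl | hji
  · exact hηi
  · have hj : η j * ξ i = 0 := by rw [hanti j i hji, hηi, zero_mul, neg_zero]
    exact (mul_eq_zero.mp hj).resolve_right hi

section SymmTensor

variable {K ι : Type*} [Field K] [DecidableEq ι]

def symmTensor (η ξ : ι → K) : Matrix ι ι K :=
  Matrix.of fun i j => (η i * ξ j + η j * ξ i) / 2

variable [NeZero (2 : K)] {η ξ : ι → K} {c : K}

theorem mul_self_eq_of_symmTensor_eq_smul_one (h : symmTensor η ξ = c • 1) (i : ι) :
    η i * ξ i = c := by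
  have hii := congr_fun₂ h i i
  simp only [symmTensor, Matrix.of_apply, Matrix.smul_apply, Matrix.one_apply_eq,
    smul_eq_mul, mul_one] at hii
  rw [← hii, ← two_mul, mul_div_cancel_left₀ _ two_ne_zero]

theorem mul_eq_neg_of_symmTensor_eq_smul_one (h : symmTensor η ξ = c • 1) {i j : ι}
    (hij : i ≠ j) : η i * ξ j = -(η j * ξ i) := by
  have hij' := congr_fun₂ h i j
  simp only [symmTensor, Matrix.of_apply, Matrix.smul_apply, Matrix.one_apply_ne hij,
    smul_eq_mul, mul_zero, div_eq_zero_iff, two_ne_zero, or_false] at hij'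
  exact eq_neg_of_add_eq_zero_left hij'

theorem eq_zero_of_symmTensor_eq_smul_one [Fintype ι] (hι : 2 < Fintype.card ι) (hξ : ξ ≠ 0)
    (h : symmTensor η ξ = c • 1) : η = 0 := by
  obtain ⟨i, j, k, hij, hik, hjk⟩ := Fintype.two_lt_card_iff.mp hι
  have hdiag := mul_self_eq_of_symmTensor_eq_smul_one h
  have hanti : ∀ i j, i ≠ j → η i * ξ j = -(η j * ξ i) :=
    fun _ _ => mul_eq_neg_of_symmTensor_eq_smul_one h
  have hc : c = 0 := eq_zero_of_mul_self_eq_of_antisymm hij hjk hik hdiag hanti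
  exact eq_zero_of_mul_self_eq_zero_of_antisymm hξ (hc ▸ hdiag) hanti

end SymmTensor

/-- The deviatoric symmetric gradient is ℂ-elliptic in every dimension
`n ≥ 3`: if `ξ ∈ ℂ^n` is nonzero and `η ∈ ℂ^n` satisfies
`(η i * ξ j + η j * ξ i)/2 = δ_{ij} * (∑ k, η k * ξ k)/n` for all `i, j`, then `η = 0`. -/
theorem deviatoric_CElliptic_of_three_le (n : ℕ) (hn : 3 ≤ n) (ξ η : Fin n → ℂ) (hξ : ξ ≠ 0)
    (h : ∀ i j : Fin n,
      (η i * ξ j + η j * ξ i) / 2 =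
        (if i = j then (1 : ℂ) else 0) * ((∑ k, η k * ξ k) / (n : ℂ))) : η = 0 := by
  have hsymm :
      symmTensor η ξ = ((∑ k, η k * ξ k) / (n : ℂ)) • (1 : Matrix (Fin n) (Fin n) ℂ) := by
    ext i j
    rw [symmTensor, Matrix.of_apply, h, Matrix.smul_apply, Matrix.one_apply, smul_eq_mul, mul_comm]
  exact eq_zero_of_symmTensor_eq_smul_one (by rw [Fintype.card_fin]; omega) hξ hsymm
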